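/- arXiv:2303.11612 — 2 statements merged into one kernel-verified Lean document; each statement's English description precedes it below -/
import Mathlib

section
/- (Deterministic core of Theorem 9, q = 1 sampled version.) Let C ∈ ℝ^{I×T} with SVD C = U Σ V^T, let μ < r = min{I,T}, and G ∈ ℝ^{I×(μ+K)}. Write U^T G = [H; R] with H ∈ ℝ^{μ×(μ+K)}, assume H has full row rank, and define F = [H^†, 0] U^T ∈ ℝ^{(μ+K)×I}. Then ‖C C^T G F − C C^T‖_F ≤ (‖H^†‖_2 ‖R‖_2 + 1) · (∑_{i=μ+1}^{r} σ_i(C)^4)^{1/2} and ‖F‖_2 ≤ ‖H^†‖_2. -/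
/-!
Since `Vᵀ V = 1`, `C Cᵀ = U Σ² Uᵀ`; writing `F = P Uᵀ` with `P = [H†, 0]`, the residual is
`U Σ² (Uᵀ G P - 1) Uᵀ`, whose Frobenius norm is that of `Σ² (Uᵀ G P - 1)`. Because `H H† = 1`,
the first `μ` rows of `Uᵀ G P - 1` vanish, so `Σ²` may be replaced by `Σ₂²` (zero on the first
`μ` indices), leaving `Σ₂² (Uᵀ G) P - Σ₂²`. The rows of `Uᵀ G` that `Σ₂²` keeps are rows of `R`,
of length at most `‖R‖₂`, so `‖Σ₂² Uᵀ G‖_F ≤ ‖R‖₂ ‖Σ₂²‖_F`; and `‖P‖₂ ≤ ‖H†‖₂` since `P = H† E`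
with `E` having orthonormal rows. Finally `‖Σ₂²‖_F² = ∑_{i ≥ μ} σᵢ⁴`.
-/

open Matrix

noncomputable section

/-- Frobenius norm of a real matrix. -/
def frob {m n : Type*} [Fintype m] [Fintype n] (A : Matrix m n ℝ) : ℝ :=
  Real.sqrt (∑ i, ∑ j, (A i j) ^ 2)

/-- Spectral norm of a real matrix. -/
def spec {m n : Type*} [Fintype m] [Fintype n] [DecidableEq n] (A : Matrix m n ℝ) : ℝ :=
  ‖LinearMap.toContinuousLinearMap (Matrix.toEuclideanLin A)‖

section SpectralNorm

open scoped Matrix.Norms.L2Operator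

variable {l m n : Type*} [Fintype l] [Fintype m] [Fintype n]

lemma spec_eq_norm [DecidableEq n] (A : Matrix m n ℝ) : spec A = ‖A‖ := rfl

lemma spec_nonneg [DecidableEq n] (A : Matrix m n ℝ) : 0 ≤ spec A := norm_nonneg _

lemma spec_mul_le [DecidableEq n] [DecidableEq l] (A : Matrix m n ℝ) (B : Matrix n l ℝ) :
    spec (A * B) ≤ spec A * spec B :=
  l2_opNorm_mul A B

lemma spec_transpose [DecidableEq m] [DecidableEq n] (A : Matrix m n ℝ) : spec Aᵀ = spec A :=
  l2_opNorm_conjTranspose A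

lemma spec_le_one_of_transpose_mul_self [DecidableEq n] {U : Matrix m n ℝ} (hU : Uᵀ * U = 1) :
    spec U ≤ 1 := by
  -- `‖1‖` is idempotent, hence at most `1` (it is `0` when `n` is empty).
  have hone : ‖(1 : Matrix n n ℝ)‖ = ‖(1 : Matrix n n ℝ)‖ * ‖(1 : Matrix n n ℝ)‖ := by
    simpa using l2_opNorm_conjTranspose_mul_self (1 : Matrix n n ℝ)
  have hsq : spec U * spec U = ‖(1 : Matrix n n ℝ)‖ := by
    rw [spec_eq_norm, ← l2_opNorm_conjTranspose_mul_self, conjTranspose_eq_transpose_of_trivial, hU]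
  have h1 : ‖(1 : Matrix n n ℝ)‖ ≤ 1 := by nlinarith [norm_nonneg (1 : Matrix n n ℝ)]
  nlinarith [spec_nonneg U]

lemma sum_sq_mulVec_le [DecidableEq n] (A : Matrix m n ℝ) (x : n → ℝ) :
    ∑ i, (A *ᵥ x) i ^ 2 ≤ spec A ^ 2 * ∑ j, x j ^ 2 := by
  have h := l2_opNorm_mulVec A (WithLp.toLp 2 x)
  rw [EuclideanSpace.norm_eq, EuclideanSpace.norm_eq] at h
  simp only [Real.norm_eq_abs, sq_abs] at h
  rwa [← Real.sqrt_sq (norm_nonneg A), ← Real.sqrt_mul (sq_nonneg _),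
    Real.sqrt_le_sqrt_iff (by positivity)] at h

lemma sum_sq_row_le_spec_sq [DecidableEq m] [DecidableEq n] (A : Matrix m n ℝ) (k : m) :
    ∑ j, A k j ^ 2 ≤ spec A ^ 2 := by
  simpa [mulVec_single_one, spec_transpose, Pi.single_apply] using
    sum_sq_mulVec_le Aᵀ (Pi.single k 1)

end SpectralNorm

section FrobeniusNorm

attribute [local instance] Matrix.frobeniusNormedAddCommGroup

variable {l m n : Type*} [Fintype l] [Fintype m] [Fintype n]

lemma frob_eq_norm (A : Matrix m n ℝ) : frob A = ‖A‖ := by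
  rw [Matrix.frobenius_norm_def, frob, Real.sqrt_eq_rpow]
  simp only [Real.norm_eq_abs, Real.rpow_two, sq_abs, one_div]

lemma frob_nonneg (A : Matrix m n ℝ) : 0 ≤ frob A := Real.sqrt_nonneg _

lemma frob_sub_le (A B : Matrix m n ℝ) : frob (A - B) ≤ frob A + frob B := by
  simp only [frob_eq_norm]
  exact norm_sub_le A B

lemma frob_transpose (A : Matrix m n ℝ) : frob Aᵀ = frob A := by
  simp only [frob_eq_norm]
  exact frobenius_norm_transpose A

lemma frob_sq_eq_trace (A : Matrix m n ℝ) : frob A ^ 2 = trace (Aᵀ * A) := by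
  rw [frob, Real.sq_sqrt (by positivity), Finset.sum_comm]
  simp [trace, mul_apply, sq]

lemma frob_mul_of_transpose_mul_self [DecidableEq n] {U : Matrix m n ℝ} (hU : Uᵀ * U = 1)
    (X : Matrix n l ℝ) : frob (U * X) = frob X := by
  rw [← sq_eq_sq₀ (frob_nonneg _) (frob_nonneg _), frob_sq_eq_trace, frob_sq_eq_trace,
    transpose_mul, Matrix.mul_assoc, ← Matrix.mul_assoc Uᵀ, hU, Matrix.one_mul]

lemma frob_mul_transpose_of_transpose_mul_self [DecidableEq n] {U : Matrix m n ℝ}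
    (hU : Uᵀ * U = 1) (X : Matrix l n ℝ) : frob (X * Uᵀ) = frob X := by
  rw [← frob_transpose, transpose_mul, transpose_transpose, frob_mul_of_transpose_mul_self hU,
    frob_transpose]

lemma frob_mul_le_spec_mul [DecidableEq n] (A : Matrix m n ℝ) (B : Matrix n l ℝ) :
    frob (A * B) ≤ spec A * frob B := by
  rw [frob, frob, ← Real.sqrt_sq (spec_nonneg A), ← Real.sqrt_mul (sq_nonneg _)]
  refine Real.sqrt_le_sqrt ?_
  calc ∑ i, ∑ j, (A * B) i j ^ 2 = ∑ j, ∑ i, (A *ᵥ Bᵀ j) i ^ 2 := by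
        rw [Finset.sum_comm]; rfl
    _ ≤ ∑ j, spec A ^ 2 * ∑ k, Bᵀ j k ^ 2 :=
        Finset.sum_le_sum fun j _ => sum_sq_mulVec_le A (Bᵀ j)
    _ = spec A ^ 2 * ∑ k, ∑ j, B k j ^ 2 := by
        rw [← Finset.mul_sum, Finset.sum_comm]; rfl

lemma frob_mul_le_mul_spec [DecidableEq n] [DecidableEq l] (A : Matrix m n ℝ)
    (B : Matrix n l ℝ) : frob (A * B) ≤ frob A * spec B := by
  rw [← frob_transpose, transpose_mul, ← frob_transpose A, ← spec_transpose B, mul_comm]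
  exact frob_mul_le_spec_mul Bᵀ Aᵀ

lemma frob_diagonal [DecidableEq m] (d : m → ℝ) :
    frob (diagonal d) = Real.sqrt (∑ i, d i ^ 2) := by
  simp [frob, diagonal_apply, ite_pow]

lemma frob_diagonal_mul_le [DecidableEq m] {d : m → ℝ} {X : Matrix m n ℝ} {c : ℝ} (hc : 0 ≤ c)
    (hX : ∀ i, d i ≠ 0 → ∑ j, X i j ^ 2 ≤ c ^ 2) :
    frob (diagonal d * X) ≤ c * frob (diagonal d) := by
  rw [frob_diagonal, frob, ← Real.sqrt_sq hc, ← Real.sqrt_mul (sq_nonneg _), Finset.mul_sum]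
  refine Real.sqrt_le_sqrt (Finset.sum_le_sum fun i _ => ?_)
  simp only [diagonal_mul, mul_pow, ← Finset.mul_sum]
  by_cases hd : d i = 0
  · simp [hd]
  · rw [mul_comm]
    exact mul_le_mul_of_nonneg_right (hX i hd) (sq_nonneg _)

end FrobeniusNorm

section PadCols

variable {α : Type*} {l m : Type*} {μ r : ℕ}

def padCols [Zero α] (r : ℕ) (M : Matrix m (Fin μ) α) : Matrix m (Fin r) α :=
  of fun a j => if h : (j : ℕ) < μ then M a ⟨j, h⟩ else 0

lemma mul_padCols [NonUnitalNonAssocSemiring α] [Fintype m] (A : Matrix l m α)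
    (M : Matrix m (Fin μ) α) : A * padCols r M = padCols r (A * M) := by
  ext i j
  simp only [padCols, mul_apply, of_apply]
  split_ifs <;> simp

lemma padCols_one [Zero α] [One α] (h : μ ≤ r) :
    padCols r (1 : Matrix (Fin μ) (Fin μ) α) =
      (1 : Matrix (Fin r) (Fin r) α).submatrix (Fin.castLE h) id := by
  ext k j
  simp only [padCols, of_apply, submatrix_apply, id, one_apply, Fin.ext_iff, Fin.val_castLE]
  split_ifs <;> first | rfl | omega

lemma padCols_one_mul_transpose [Semiring α] (h : μ ≤ r) :
    padCols r (1 : Matrix (Fin μ) (Fin μ) α) * (padCols r (1 : Matrix (Fin μ) (Fin μ) α))ᵀ =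
      1 := by
  rw [padCols_one h, transpose_submatrix, transpose_one,
    ← submatrix_mul _ _ _ _ _ Function.bijective_id, Matrix.mul_one,
    submatrix_one _ (Fin.castLE_injective h)]

lemma spec_padCols_le [Fintype m] (h : μ ≤ r) (M : Matrix m (Fin μ) ℝ) :
    spec (padCols r M) ≤ spec M := by
  have hE : spec (padCols r (1 : Matrix (Fin μ) (Fin μ) ℝ)) ≤ 1 := by
    rw [← spec_transpose]
    refine spec_le_one_of_transpose_mul_self ?_
    rw [transpose_transpose, padCols_one_mul_transpose h]
  calc spec (padCols r M) = spec (M * padCols r 1) := by rw [mul_padCols, Matrix.mul_one]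
    _ ≤ spec M * spec (padCols r (1 : Matrix (Fin μ) (Fin μ) ℝ)) := spec_mul_le _ _
    _ ≤ spec M := mul_le_of_le_one_right (spec_nonneg M) hE

lemma mul_padCols_apply_of_row_eq [Semiring α] [Fintype l] {B : Matrix m l α}
    {H : Matrix (Fin μ) l α} {Hdag : Matrix l (Fin μ) α} (hHdag : H * Hdag = 1) (h : μ ≤ r)
    {i : m} {k : Fin μ} (hi : B i = H k) (j : Fin r) :
    (B * padCols r Hdag) i j = (1 : Matrix (Fin r) (Fin r) α) (Fin.castLE h k) j := by
  have hrow : (B * Hdag) i = (H * Hdag) k := funext fun c => by simp only [mul_apply, hi]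
  have hpad : padCols r (B * Hdag) i j = padCols r (H * Hdag) k j := by
    simp only [padCols, of_apply, hrow]
  rw [mul_padCols, hpad, hHdag, padCols_one h]
  rfl

end PadCols

lemma mul_transpose_eq_of_svd {α : Type*} [CommSemiring α] {m p k : Type*} [Fintype p]
    [Fintype k] [DecidableEq k] {C : Matrix m p α} {U : Matrix m k α} {V : Matrix p k α}
    {σ : k → α} (hV : Vᵀ * V = 1) (hC : C = U * diagonal σ * Vᵀ) :
    C * Cᵀ = U * diagonal (fun i => σ i ^ 2) * Uᵀ := by
  simp only [hC, transpose_mul, transpose_transpose, diagonal_transpose, Matrix.mul_assoc]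
  rw [← Matrix.mul_assoc Vᵀ, hV, Matrix.one_mul, ← Matrix.mul_assoc (diagonal σ),
    diagonal_mul_diagonal]
  simp only [sq]

lemma mul_transpose_mul_inv_of_rank_eq {k n : Type*} [Fintype k] [DecidableEq k] [Fintype n]
    {H : Matrix k n ℝ} (hH : H.rank = Fintype.card k) : H * (Hᵀ * (H * Hᵀ)⁻¹) = 1 := by
  have hrange : LinearMap.range (H * Hᵀ).mulVecLin = ⊤ := by
    refine Submodule.eq_top_of_finrank_eq ?_
    rw [Module.finrank_fintype_fun_eq_card, ← hH, ← rank_self_mul_transpose]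
    rfl
  have hunit : IsUnit (H * Hᵀ) :=
    mulVec_surjective_iff_isUnit.mp (LinearMap.range_eq_top.mp hrange)
  rw [← Matrix.mul_assoc, mul_nonsing_inv _ ((isUnit_iff_isUnit_det _).mp hunit)]

lemma diagonal_mul_eq_diagonal_mul {α : Type*} [Semiring α] {m n : Type*} [Fintype m]
    [DecidableEq m] {d e : m → α} {M : Matrix m n α} (h : ∀ i, d i ≠ e i → ∀ j, M i j = 0) :
    diagonal d * M = diagonal e * M := by
  ext i j
  simp only [diagonal_mul]
  by_cases hi : d i = e i
  · rw [hi]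
  · simp [h i hi j]

section Residual

variable {m n k p : Type*} [Fintype m] [Fintype n] [Fintype k] [Fintype p] [DecidableEq k]

lemma spec_mul_transpose_le [DecidableEq m] {U : Matrix m k ℝ} (hU : Uᵀ * U = 1)
    (A : Matrix n k ℝ) : spec (A * Uᵀ) ≤ spec A := by
  have hUt : spec Uᵀ ≤ 1 := spec_transpose U ▸ spec_le_one_of_transpose_mul_self hU
  calc spec (A * Uᵀ) ≤ spec A * spec Uᵀ := spec_mul_le _ _
    _ ≤ spec A := mul_le_of_le_one_right (spec_nonneg A) hUt

lemma frob_diagonal_ite (q : k → Prop) [DecidablePred q] (f : k → ℝ) :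
    frob (diagonal fun i => if q i then f i ^ 2 else 0) =
      Real.sqrt (∑ i ∈ Finset.univ.filter q, f i ^ 4) := by
  rw [frob_diagonal, Finset.sum_filter]
  congr 1
  refine Finset.sum_congr rfl fun i _ => ?_
  split_ifs <;> ring

lemma frob_gram_mul_sub_eq_of_svd {C : Matrix m p ℝ} {U : Matrix m k ℝ} {V : Matrix p k ℝ}
    {σ Λ : k → ℝ} (hU : Uᵀ * U = 1) (hV : Vᵀ * V = 1) (hC : C = U * diagonal σ * Vᵀ)
    {G : Matrix m n ℝ} {P : Matrix n k ℝ}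
    (hΛ : ∀ i, σ i ^ 2 ≠ Λ i → ∀ j, (Uᵀ * G * P - 1 : Matrix k k ℝ) i j = 0) :
    frob (C * Cᵀ * G * (P * Uᵀ) - C * Cᵀ) = frob (diagonal Λ * (Uᵀ * G) * P - diagonal Λ) := by
  have hdiag := diagonal_mul_eq_diagonal_mul hΛ
  simp only [Matrix.mul_sub, Matrix.mul_one] at hdiag
  rw [mul_transpose_eq_of_svd hV hC, Matrix.mul_assoc (diagonal Λ), ← hdiag,
    ← frob_mul_of_transpose_mul_self hU, ← frob_mul_transpose_of_transpose_mul_self hU]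
  simp only [Matrix.mul_sub, Matrix.sub_mul, Matrix.mul_assoc]

lemma frob_diagonal_mul_mul_sub_le [DecidableEq m] [DecidableEq n] {d : m → ℝ}
    {B : Matrix m n ℝ} {P : Matrix n m ℝ} {c : ℝ} (hc : 0 ≤ c)
    (hB : ∀ i, d i ≠ 0 → ∑ j, B i j ^ 2 ≤ c ^ 2) :
    frob (diagonal d * B * P - diagonal d) ≤ (spec P * c + 1) * frob (diagonal d) := by
  calc frob (diagonal d * B * P - diagonal d)
      ≤ frob (diagonal d * B) * spec P + frob (diagonal d) :=
        (frob_sub_le _ _).trans (add_le_add_left (frob_mul_le_mul_spec _ _) _)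
    _ ≤ c * frob (diagonal d) * spec P + frob (diagonal d) := by
        gcongr
        · exact spec_nonneg P
        · exact frob_diagonal_mul_le hc hB
    _ = (spec P * c + 1) * frob (diagonal d) := by ring

end Residual

/-- Deterministic core of Theorem 9 (`q = 1`, sampled version): with the thin SVD
`C = U Σ Vᵀ`, blocks `H`, `R` of `Uᵀ G`, full row rank `H` with `H† = Hᵀ (H Hᵀ)⁻¹`,
and `F = [H†, 0] Uᵀ`, one has the stated bounds. -/
theorem stmt12 {I T r μ K : ℕ}
    (hμr : μ < r)
    (C : Matrix (Fin I) (Fin T) ℝ)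
    (U : Matrix (Fin I) (Fin r) ℝ) (V : Matrix (Fin T) (Fin r) ℝ) (σ : Fin r → ℝ)
    (hU : Uᵀ * U = 1) (hV : Vᵀ * V = 1)
    (hC : C = U * Matrix.diagonal σ * Vᵀ)
    (G : Matrix (Fin I) (Fin (μ + K)) ℝ)
    (H : Matrix (Fin μ) (Fin (μ + K)) ℝ) (R : Matrix (Fin (r - μ)) (Fin (μ + K)) ℝ)
    (hH : ∀ (i : Fin μ) (j : Fin (μ + K)),
      H i j = (Uᵀ * G) ⟨i, Nat.lt_trans i.isLt hμr⟩ j)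
    (hR : ∀ (i : Fin (r - μ)) (j : Fin (μ + K)),
      R i j = (Uᵀ * G) ⟨μ + i, by have := i.isLt; omega⟩ j)
    (hrank : H.rank = μ)
    (Hdag : Matrix (Fin (μ + K)) (Fin μ) ℝ) (hHdag : Hdag = Hᵀ * (H * Hᵀ)⁻¹)
    (F : Matrix (Fin (μ + K)) (Fin I) ℝ)
    (hF : F = (Matrix.of fun (a : Fin (μ + K)) (j : Fin r) =>
        if h : (j : ℕ) < μ then Hdag a ⟨j, h⟩ else 0) * Uᵀ) :
    frob (C * Cᵀ * G * F - C * Cᵀ) ≤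
        (spec Hdag * spec R + 1) *
          Real.sqrt (∑ i ∈ Finset.univ.filter (fun i : Fin r => μ ≤ (i : ℕ)), σ i ^ 4) ∧
      spec F ≤ spec Hdag := by
  set Λ : Fin r → ℝ := fun i => if μ ≤ (i : ℕ) then σ i ^ 2 else 0
  have hHHdag : H * Hdag = 1 := hHdag ▸ mul_transpose_mul_inv_of_rank_eq (by simpa using hrank)
  have hlow : ∀ i, σ i ^ 2 ≠ Λ i → ∀ j,
      (Uᵀ * G * padCols r Hdag - 1 : Matrix (Fin r) (Fin r) ℝ) i j = 0 := fun i hi j => by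
    have hiμ : (i : ℕ) < μ := by by_contra h; simp [Λ, not_lt.mp h] at hi
    rw [Matrix.sub_apply, mul_padCols_apply_of_row_eq hHHdag hμr.le (k := ⟨i, hiμ⟩)
      (funext fun a => (hH _ a).symm), sub_eq_zero]
    rfl
  have hhigh : ∀ i, Λ i ≠ 0 → ∑ a, (Uᵀ * G) i a ^ 2 ≤ spec R ^ 2 := fun i hi => by
    have hiμ : μ ≤ (i : ℕ) := by by_contra h; simp [Λ, h] at hi
    have hrow : (Uᵀ * G) i = R ⟨i - μ, by omega⟩ := funext fun a => by
      rw [hR]; exact congrArg (fun k => (Uᵀ * G) k a) (Fin.ext (by simp; omega))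
    rw [hrow]
    exact sum_sq_row_le_spec_sq R _
  have hP : spec (padCols r Hdag) ≤ spec Hdag := spec_padCols_le hμr.le Hdag
  refine ⟨?_, hF ▸ (spec_mul_transpose_le hU _).trans hP⟩
  rw [show F = padCols r Hdag * Uᵀ from hF, ← frob_diagonal_ite,
    frob_gram_mul_sub_eq_of_svd hU hV hC hlow]
  refine (frob_diagonal_mul_mul_sub_le (spec_nonneg R) hhigh).trans ?_
  gcongr
  exacts [frob_nonneg _, spec_nonneg R]

end
end

section
/- (Expectation bound for uniformly sampled matrix multiplication.) With the setting of the previous statement but with uniform probabilities p_i = 1/I_2, one has E‖AB − CR‖_F^2 ≤ (I_2/K) ∑_{i=1}^{I_2} ‖A(:,i)‖_2^2 ‖B(i,:)‖_2^2 ≤ (I_2/K) ‖A‖_F^2 ‖B‖_F^2. -/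
open Matrix

noncomputable section

/-!
Fix an entry `(a, b)` and put `x i = A a i * B i b`. Since `(A * B) a b = ∑ i, x i`, the error
`(A * B - C * R) a b` equals `(1 / K) ∑ t, h (ξ t)` with `h i = ∑ j, x j - I₂ * x i`, and `∑ i, h i = 0`.
The samples `ξ t` are independent and uniform, so the cross terms of the square average to zero and
the mean of `(∑ t, h (ξ t)) ^ 2` is `(K / I₂) ∑ i, h i ^ 2`; moreover
`∑ i, h i ^ 2 = I₂ ^ 2 ∑ i, x i ^ 2 - I₂ (∑ i, x i) ^ 2 ≤ I₂ ^ 2 ∑ i, x i ^ 2`.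
Summing over the entries gives the first bound; the second is `∑ f g ≤ (∑ f) (∑ g)` for `f, g ≥ 0`.
-/

open Finset

theorem frob_sq {m n : Type*} [Fintype m] [Fintype n] (A : Matrix m n ℝ) :
    frob A ^ 2 = ∑ i, ∑ j, A i j ^ 2 :=
  Real.sq_sqrt (by positivity)

theorem sum_mul_le_sum_mul_sum_of_nonneg {ι R : Type*} [CommSemiring R] [PartialOrder R]
    [IsOrderedRing R] (s : Finset ι) {f g : ι → R} (hf : ∀ i ∈ s, 0 ≤ f i)
    (hg : ∀ i ∈ s, 0 ≤ g i) :
    ∑ i ∈ s, f i * g i ≤ (∑ i ∈ s, f i) * ∑ i ∈ s, g i := by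
  rw [sum_mul]
  exact sum_le_sum fun i hi => mul_le_mul_of_nonneg_left (single_le_sum hg hi) (hf i hi)

section UniformSampling

variable {ι : Type*} [Fintype ι]

theorem sum_fun_fin_succ_eq_sum_cons {M : Type*} [AddCommMonoid M] {K : ℕ}
    (F : (Fin (K + 1) → ι) → M) :
    ∑ ξ : Fin (K + 1) → ι, F ξ = ∑ x : ι, ∑ ξ : Fin K → ι, F (Fin.cons x ξ) := by
  rw [← Fintype.sum_prod_type']
  exact (Fintype.sum_equiv (Fin.consEquiv fun _ => ι) _ _ fun _ => rfl).symm

-- Multiplied through by `card ι`, so that no truncated exponent `K - 1` appears.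
theorem card_mul_sum_sq_sum_comp_of_sum_eq_zero (h : ι → ℝ) (hs : ∑ i, h i = 0) (K : ℕ) :
    Fintype.card ι * ∑ ξ : Fin K → ι, (∑ t, h (ξ t)) ^ 2 =
      K * Fintype.card ι ^ K * ∑ i, h i ^ 2 := by
  induction K with
  | zero => simp
  | succ K ih =>
    set n : ℝ := (Fintype.card ι : ℝ)
    have hcons : ∀ x : ι,
        ∑ ξ : Fin K → ι, (∑ t, h ((Fin.cons x ξ : Fin (K + 1) → ι) t)) ^ 2 =
          n ^ K * h x ^ 2 + 2 * h x * ∑ ξ : Fin K → ι, ∑ t, h (ξ t) +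
            ∑ ξ : Fin K → ι, (∑ t, h (ξ t)) ^ 2 := by
      intro x
      simp only [Fin.sum_univ_succ, Fin.cons_zero, Fin.cons_succ, add_sq, sum_add_distrib,
        sum_const, card_univ, Fintype.card_fun, Fintype.card_fin, ← mul_sum, nsmul_eq_mul,
        Nat.cast_pow, n]
    -- the cross term carries the factor `∑ x, h x = 0`
    rw [sum_fun_fin_succ_eq_sum_cons, sum_congr rfl fun x _ => hcons x]
    simp only [sum_add_distrib, ← sum_mul, ← mul_sum, hs, sum_const, card_univ, nsmul_eq_mul]
    push_cast
    linear_combination n * ih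

theorem uniform_mean_sq_sum_comp_of_sum_eq_zero (h : ι → ℝ) (hs : ∑ i, h i = 0) (K : ℕ) :
    (1 / Fintype.card ι : ℝ) ^ K * ∑ ξ : Fin K → ι, (∑ t, h (ξ t)) ^ 2 =
      K / Fintype.card ι * ∑ i, h i ^ 2 := by
  rcases eq_or_ne (Fintype.card ι : ℝ) 0 with hn | hn
  · cases K <;> simp [hn]
  · rw [← mul_right_inj' hn, mul_left_comm, card_mul_sum_sq_sum_comp_of_sum_eq_zero h hs K,
      one_div, inv_pow]
    field_simp

theorem sum_sq_sum_sub_card_mul_le (x : ι → ℝ) :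
    ∑ i, (∑ j, x j - Fintype.card ι * x i) ^ 2 ≤ (Fintype.card ι : ℝ) ^ 2 * ∑ i, x i ^ 2 := by
  have hexpand : ∑ i, (∑ j, x j - Fintype.card ι * x i) ^ 2 =
      (Fintype.card ι : ℝ) ^ 2 * ∑ i, x i ^ 2 - Fintype.card ι * (∑ i, x i) ^ 2 := by
    simp only [sub_sq, sum_add_distrib, sum_sub_distrib, sum_const, card_univ, nsmul_eq_mul,
      mul_pow, ← mul_sum]
    ring
  have : (0 : ℝ) ≤ Fintype.card ι * (∑ i, x i) ^ 2 := by positivity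
  linarith

end UniformSampling

section SampledProduct

variable {m ι p : Type*} [Fintype ι]

-- The paper's `C R`, where `C(:, t) = c A(:, ξ t)` and `R(t, :) = c B(ξ t, :)`.
def sampledMul (c : ℝ) (A : Matrix m ι ℝ) (B : Matrix ι p ℝ) {K : ℕ} (ξ : Fin K → ι) :
    Matrix m p ℝ :=
  (of fun a t => c * A a (ξ t)) * of fun t b => c * B (ξ t) b

variable {K : ℕ} {c : ℝ}

theorem mul_sub_sampledMul_apply (hK : K ≠ 0) (hc : c ^ 2 = Fintype.card ι / K)
    (A : Matrix m ι ℝ) (B : Matrix ι p ℝ) (ξ : Fin K → ι) (a : m) (b : p) :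
    (A * B - sampledMul c A B ξ) a b =
      (∑ t, (∑ i, A a i * B i b - Fintype.card ι * (A a (ξ t) * B (ξ t) b))) / K := by
  have hK' : (K : ℝ) ≠ 0 := Nat.cast_ne_zero.mpr hK
  simp only [sampledMul, Matrix.sub_apply, mul_apply, of_apply, sum_sub_distrib, sum_const,
    card_univ, Fintype.card_fin, nsmul_eq_mul, ← mul_sum]
  rw [sum_congr rfl fun t _ => show c * A a (ξ t) * (c * B (ξ t) b) =
    c ^ 2 * (A a (ξ t) * B (ξ t) b) by ring, ← mul_sum, hc]
  field_simp

theorem sum_uniform_sq_mul_sub_sampledMul_apply_le (hK : K ≠ 0)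
    (hc : c ^ 2 = Fintype.card ι / K) (A : Matrix m ι ℝ) (B : Matrix ι p ℝ) (a : m) (b : p) :
    ∑ ξ : Fin K → ι, (1 / Fintype.card ι : ℝ) ^ K * ((A * B - sampledMul c A B ξ) a b) ^ 2 ≤
      Fintype.card ι / K * ∑ i, A a i ^ 2 * B i b ^ 2 := by
  set n : ℝ := (Fintype.card ι : ℝ)
  set x : ι → ℝ := fun i => A a i * B i b
  set h : ι → ℝ := fun i => ∑ j, x j - n * x i
  have hs : ∑ i, h i = 0 := by
    simp only [h, sum_sub_distrib, sum_const, card_univ, nsmul_eq_mul, ← mul_sum, n, sub_self]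
  calc ∑ ξ : Fin K → ι, (1 / n) ^ K * ((A * B - sampledMul c A B ξ) a b) ^ 2
      = (1 / n) ^ K * (∑ ξ : Fin K → ι, (∑ t, h (ξ t)) ^ 2) / K ^ 2 := by
        rw [mul_div_assoc, sum_div, mul_sum]
        refine sum_congr rfl fun ξ _ => congrArg _ ?_
        rw [mul_sub_sampledMul_apply hK hc, div_pow]
    _ = K / n * (∑ i, h i ^ 2) / K ^ 2 := by
        rw [uniform_mean_sq_sum_comp_of_sum_eq_zero h hs]
    _ ≤ K / n * (n ^ 2 * ∑ i, x i ^ 2) / K ^ 2 := by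
        gcongr
        exact sum_sq_sum_sub_card_mul_le x
    _ = n / K * ∑ i, A a i ^ 2 * B i b ^ 2 := by
        simp only [x, mul_pow]
        rcases eq_or_ne n 0 with hn | hn
        · simp [hn]
        · field_simp

theorem sum_uniform_frob_sq_mul_sub_sampledMul_le [Fintype m] [Fintype p] (hK : K ≠ 0)
    (hc : c ^ 2 = Fintype.card ι / K) (A : Matrix m ι ℝ) (B : Matrix ι p ℝ) :
    ∑ ξ : Fin K → ι, (1 / Fintype.card ι : ℝ) ^ K * frob (A * B - sampledMul c A B ξ) ^ 2 ≤
      Fintype.card ι / K * ∑ i, (∑ a, A a i ^ 2) * ∑ b, B i b ^ 2 := by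
  have hentries : ∀ ξ : Fin K → ι,
      (1 / Fintype.card ι : ℝ) ^ K * frob (A * B - sampledMul c A B ξ) ^ 2 =
        ∑ a, ∑ b, (1 / Fintype.card ι : ℝ) ^ K * ((A * B - sampledMul c A B ξ) a b) ^ 2 := by
    intro ξ
    simp only [frob_sq, mul_sum]
  calc ∑ ξ : Fin K → ι, (1 / Fintype.card ι : ℝ) ^ K * frob (A * B - sampledMul c A B ξ) ^ 2
      = ∑ a, ∑ b, ∑ ξ : Fin K → ι,
          (1 / Fintype.card ι : ℝ) ^ K * ((A * B - sampledMul c A B ξ) a b) ^ 2 := by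
        simp only [hentries]
        rw [sum_comm]
        exact sum_congr rfl fun a _ => sum_comm
    _ ≤ ∑ a, ∑ b, Fintype.card ι / K * ∑ i, A a i ^ 2 * B i b ^ 2 := by
        gcongr with a _ b _
        exact sum_uniform_sq_mul_sub_sampledMul_apply_le hK hc A B a b
    _ = Fintype.card ι / K * ∑ i, (∑ a, A a i ^ 2) * ∑ b, B i b ^ 2 := by
        simp only [← mul_sum]
        congr 1
        simp only [sum_mul_sum]
        rw [sum_comm (s := univ (α := ι))]
        exact sum_congr rfl fun a _ => sum_comm

end SampledProduct

/-- Expectation bound for uniformly sampled matrix multiplication. -/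
theorem stmt15 {I1 I2 I3 K : ℕ} (hK : 1 ≤ K)
    (A : Matrix (Fin I1) (Fin I2) ℝ) (B : Matrix (Fin I2) (Fin I3) ℝ) :
    (∑ ξ : Fin K → Fin I2, ((1 : ℝ) / I2) ^ K *
        frob (A * B -
          (Matrix.of fun a t => Real.sqrt ((I2 : ℝ) / K) * A a (ξ t)) *
            (Matrix.of fun t b => Real.sqrt ((I2 : ℝ) / K) * B (ξ t) b)) ^ 2 ≤
      (I2 : ℝ) / K * ∑ i, (∑ a, A a i ^ 2) * (∑ b, B i b ^ 2)) ∧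
    (I2 : ℝ) / K * ∑ i, (∑ a, A a i ^ 2) * (∑ b, B i b ^ 2) ≤
      (I2 : ℝ) / K * (frob A ^ 2 * frob B ^ 2) := by
  have hc : Real.sqrt ((I2 : ℝ) / K) ^ 2 = Fintype.card (Fin I2) / K := by
    rw [Fintype.card_fin, Real.sq_sqrt (by positivity)]
  refine ⟨?_, ?_⟩
  · have hbound := sum_uniform_frob_sq_mul_sub_sampledMul_le (by omega) hc A B
    rwa [Fintype.card_fin] at hbound
  · gcongr
    rw [frob_sq, frob_sq, sum_comm]
    exact sum_mul_le_sum_mul_sum_of_nonneg _ (fun i _ => by positivity) fun i _ => by positivity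

end
end
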